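/- Let G be a finite group with exactly k subgroups of prime order. Then the number of subgroups of G not attaining the maximum Chermak–Delgado measure is at least k. -/

import Mathlib

/-- The Chermak–Delgado measure of a subgroup. -/
noncomputable def cdMeasure {G : Type*} [Group G] (H : Subgroup G) : ℕ :=
  Nat.card H * Nat.card (Subgroup.centralizer (H : Set G))

/-!
A subgroup of prime order outside CD(G) is counted by itself. At most one subgroup of prime order
lies in CD(G), and if one does, the trivial subgroup lies outside CD(G) and is counted in its
place. Both facts rest on the Chermak–Delgado inequality `m(H) m(K) ≤ m(H ⊔ K) m(H ⊓ K)`, which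
makes CD(G) a sublattice: two distinct members of prime order would put their trivial intersection
into CD(G). It is therefore enough to show that a member `A` of prime order `p` keeps `1` out of
CD(G).

Suppose `1 ∈ CD(G)`. Then the maximal measure is `|G|`, so `|G : C_G(H)| = |H|` for every
`H ∈ CD(G)`. Two members of order `p` therefore generate a group of order `p²`, so they commute,
and the join `J` of all members of order `p` is a normal abelian `p`-subgroup in CD(G) with
`|G : C_G(J)| = |J|`. For a Sylow `p`-subgroup `P` this gives `P C_G(J) = G`, so a nontrivial
fixed point of `P` acting on `J` is central in `G`. But `1 ∈ CD(G)` forces `Z(G) = 1`.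
-/

namespace Subgroup

variable {G : Type*} [Group G]

theorem centralizer_sup (H K : Subgroup G) :
    centralizer ((H ⊔ K : Subgroup G) : Set G) =
      centralizer (H : Set G) ⊓ centralizer (K : Set G) := by
  rw [← H.closure_eq, ← K.closure_eq, ← closure_union, centralizer_closure, closure_eq,
    closure_eq]
  ext x
  simp only [mem_centralizer_iff, mem_inf, Set.mem_union, or_imp, forall_and]

theorem pow_eq_one_of_mem_iSup {ι : Sort*} {f : ι → Subgroup G} {n : ℕ}
    (hcomm : ⨆ i, f i ≤ centralizer ((⨆ i, f i : Subgroup G) : Set G))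
    (hf : ∀ i, ∀ x ∈ f i, x ^ n = 1) {x : G} (hx : x ∈ ⨆ i, f i) : x ^ n = 1 := by
  induction hx using iSup_induction' with
  | hp i x hx => exact hf i x hx
  | h1 => exact one_pow n
  | hmul x y _ hy hx1 hy1 =>
    have hxy : Commute x y := mem_centralizer_iff.mp (hcomm hy) x ‹_›
    rw [hxy.mul_pow, hx1, hy1, one_mul]

variable [Finite G]

theorem card_mul_card_le_card_sup_mul_card_inf (H K : Subgroup G) :
    Nat.card H * Nat.card K ≤ Nat.card ↥(H ⊔ K) * Nat.card ↥(H ⊓ K) := by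
  have hH : Nat.card ↥(H ⊓ K) * K.relIndex H = Nat.card H := by
    rw [← inf_relIndex_left, ← relIndex_bot_left, ← relIndex_bot_left,
      relIndex_mul_relIndex _ _ _ bot_le inf_le_left]
  have hK : Nat.card K * K.relIndex (H ⊔ K) = Nat.card ↥(H ⊔ K) := by
    rw [← relIndex_bot_left, ← relIndex_bot_left, relIndex_mul_relIndex _ _ _ bot_le le_sup_right]
  have hle : K.relIndex H ≤ K.relIndex (H ⊔ K) :=
    relIndex_le_of_le_right le_sup_left (right_ne_zero_of_mul (hK ▸ Nat.card_pos.ne'))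
  rw [← hH, ← hK]
  calc Nat.card ↥(H ⊓ K) * K.relIndex H * Nat.card K
      ≤ Nat.card ↥(H ⊓ K) * K.relIndex (H ⊔ K) * Nat.card K := by gcongr
    _ = Nat.card K * K.relIndex (H ⊔ K) * Nat.card ↥(H ⊓ K) := by ring

theorem inf_eq_bot_of_card_prime {H K : Subgroup G} (hH : (Nat.card H).Prime)
    (hK : (Nat.card K).Prime) (hne : H ≠ K) : H ⊓ K = ⊥ := by
  rcases hH.eq_one_or_self_of_dvd _ (card_dvd_of_le inf_le_left) with h | h
  · exact card_eq_one.mp h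
  · have hHK : H ≤ K := (eq_of_le_of_card_ge inf_le_left h.ge) ▸ inf_le_right
    have hcard : Nat.card H = Nat.card K :=
      (Nat.prime_dvd_prime_iff_eq hH hK).mp (card_dvd_of_le hHK)
    exact absurd (eq_of_le_of_card_ge hHK hcard.ge) hne

theorem inf_center_ne_bot_of_index_centralizer_eq_prime_pow {p n : ℕ} [hp : Fact p.Prime]
    (N : Subgroup G) [N.Normal] (hpN : p ∣ Nat.card N)
    (hidx : (centralizer (N : Set G)).index = p ^ n) : N ⊓ center G ≠ ⊥ := by
  obtain ⟨P⟩ : Nonempty (Sylow p G) := inferInstance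
  have htop : (P : Subgroup G) ⊔ centralizer (N : Set G) = ⊤ := by
    rw [← index_eq_one]
    have hcop : Nat.Coprime (p ^ n) (P : Subgroup G).index :=
      (hp.out.coprime_iff_not_dvd.mpr P.not_dvd_index).pow_left n
    exact Nat.eq_one_of_dvd_coprimes hcop (hidx ▸ index_dvd_of_le le_sup_right)
      (index_dvd_of_le le_sup_left)
  let _ : MulAction P N :=
    MulAction.compHom N ((MulAut.conjNormal (H := N)).comp (P : Subgroup G).subtype)
  have hfix1 : (1 : N) ∈ MulAction.fixedPoints P N :=
    fun c => map_one (MulAut.conjNormal (H := N) (c : G))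
  obtain ⟨b, hb, hb1⟩ :=
    P.isPGroup'.exists_fixed_point_of_prime_dvd_card_of_fixed_point N hpN hfix1
  have hbP : (b : G) ∈ centralizer (P : Set G) := by
    refine mem_centralizer_iff.mpr fun c hc => ?_
    have hconj : c * b * c⁻¹ = b := congrArg Subtype.val (hb ⟨c, hc⟩)
    exact mul_inv_eq_iff_eq_mul.mp hconj
  have hbC : (b : G) ∈ centralizer (centralizer (N : Set G) : Set G) :=
    le_centralizer_iff.mp le_rfl b.2
  have hbZ : (b : G) ∈ center G := by
    rw [← centralizer_univ, ← coe_top, ← htop, centralizer_sup]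
    exact ⟨hbP, hbC⟩
  rw [Ne, eq_bot_iff_forall, not_forall]
  exact ⟨b, fun h => hb1 (Subtype.ext (h ⟨b.2, hbZ⟩).symm)⟩

end Subgroup

open Subgroup

section ChermakDelgado

variable {G : Type*} [Group G]

theorem cdMeasure_bot : cdMeasure (⊥ : Subgroup G) = Nat.card G := by
  rw [cdMeasure, coe_bot, centralizer_eq_top_iff_subset.mpr (by simp), card_bot, card_top,
    one_mul]

theorem cdMeasure_center : cdMeasure (center G) = Nat.card (center G) * Nat.card G := by
  rw [cdMeasure, centralizer_center, card_top]

def IsCDSubgroup (H : Subgroup G) : Prop :=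
  ∀ K : Subgroup G, cdMeasure K ≤ cdMeasure H

variable [Finite G] {H K : Subgroup G}

theorem cdMeasure_pos (H : Subgroup G) : 0 < cdMeasure H :=
  Nat.mul_pos Nat.card_pos Nat.card_pos

theorem cdMeasure_le_cdMeasure_map (φ : G ≃* G) (H : Subgroup G) :
    cdMeasure H ≤ cdMeasure (H.map φ.toMonoidHom) := by
  have hinj : Function.Injective φ.toMonoidHom := φ.injective
  rw [cdMeasure, cdMeasure, card_map_of_injective hinj, coe_map,
    ← card_map_of_injective (K := centralizer (H : Set G)) (f := φ.toMonoidHom) hinj]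
  gcongr
  exact card_le_of_le (map_centralizer_le_centralizer_image _ φ.toMonoidHom)

theorem cdMeasure_map (φ : G ≃* G) (H : Subgroup G) :
    cdMeasure (H.map φ.toMonoidHom) = cdMeasure H := by
  refine le_antisymm ?_ (cdMeasure_le_cdMeasure_map φ H)
  simpa [map_map] using cdMeasure_le_cdMeasure_map φ.symm (H.map φ.toMonoidHom)

theorem cdMeasure_mul_cdMeasure_le (H K : Subgroup G) :
    cdMeasure H * cdMeasure K ≤ cdMeasure (H ⊔ K) * cdMeasure (H ⊓ K) := by
  have hcent : Nat.card (centralizer (H : Set G)) * Nat.card (centralizer (K : Set G)) ≤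
      Nat.card (centralizer ((H ⊔ K : Subgroup G) : Set G)) *
        Nat.card (centralizer ((H ⊓ K : Subgroup G) : Set G)) := by
    refine (card_mul_card_le_card_sup_mul_card_inf _ _).trans ?_
    rw [centralizer_sup, mul_comm]
    gcongr
    exact card_le_of_le (sup_le (centralizer_le inf_le_left) (centralizer_le inf_le_right))
  calc cdMeasure H * cdMeasure K
      = (Nat.card H * Nat.card K) *
          (Nat.card (centralizer (H : Set G)) * Nat.card (centralizer (K : Set G))) := by
        rw [cdMeasure, cdMeasure]; ring
    _ ≤ (Nat.card ↥(H ⊔ K) * Nat.card ↥(H ⊓ K)) *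
          (Nat.card (centralizer ((H ⊔ K : Subgroup G) : Set G)) *
            Nat.card (centralizer ((H ⊓ K : Subgroup G) : Set G))) :=
        Nat.mul_le_mul (card_mul_card_le_card_sup_mul_card_inf H K) hcent
    _ = cdMeasure (H ⊔ K) * cdMeasure (H ⊓ K) := by rw [cdMeasure, cdMeasure]; ring

theorem IsCDSubgroup.map (hH : IsCDSubgroup H) (φ : G ≃* G) :
    IsCDSubgroup (H.map φ.toMonoidHom) :=
  fun K => (hH K).trans_eq (cdMeasure_map φ H).symm

theorem IsCDSubgroup.sup_and_inf (hH : IsCDSubgroup H) (hK : IsCDSubgroup K) :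
    IsCDSubgroup (H ⊔ K) ∧ IsCDSubgroup (H ⊓ K) := by
  have hM : cdMeasure K = cdMeasure H := le_antisymm (hH K) (hK H)
  have hineq := cdMeasure_mul_cdMeasure_le H K
  have hsup := hH (H ⊔ K)
  have hinf := hH (H ⊓ K)
  have hpos := cdMeasure_pos H
  rw [hM] at hineq
  exact ⟨fun L => (hH L).trans (by nlinarith), fun L => (hH L).trans (by nlinarith)⟩

theorem IsCDSubgroup.sup (hH : IsCDSubgroup H) (hK : IsCDSubgroup K) : IsCDSubgroup (H ⊔ K) :=
  (hH.sup_and_inf hK).1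

theorem IsCDSubgroup.inf (hH : IsCDSubgroup H) (hK : IsCDSubgroup K) : IsCDSubgroup (H ⊓ K) :=
  (hH.sup_and_inf hK).2

theorem center_eq_bot_of_isCDSubgroup_bot (h : IsCDSubgroup (⊥ : Subgroup G)) :
    center G = ⊥ := by
  have hle := h (center G)
  rw [cdMeasure_center, cdMeasure_bot] at hle
  exact eq_bot_of_card_le _ (by simpa using hle)

theorem IsCDSubgroup.card_eq_index_centralizer (hH : IsCDSubgroup H)
    (hbot : IsCDSubgroup (⊥ : Subgroup G)) : Nat.card H = (centralizer (H : Set G)).index := by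
  have hm : cdMeasure H = Nat.card G := (le_antisymm (hbot H) (hH ⊥)).trans cdMeasure_bot
  rw [cdMeasure, ← card_mul_index (centralizer (H : Set G)), mul_comm] at hm
  exact Nat.eq_of_mul_eq_mul_left Nat.card_pos hm

theorem IsCDSubgroup.le_centralizer_of_card_eq_prime {p : ℕ} [Fact p.Prime] {B C : Subgroup G}
    (hB : IsCDSubgroup B) (hC : IsCDSubgroup C) (hbot : IsCDSubgroup (⊥ : Subgroup G))
    (hBp : Nat.card B = p) (hCp : Nat.card C = p) : B ≤ centralizer (C : Set G) := by
  by_cases hBC : B = C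
  · rw [← hBC]
    have := isCyclic_of_prime_card hBp
    exact le_centralizer (H := B)
  have hinf : B ⊓ C = ⊥ := inf_eq_bot_of_card_prime (hBp ▸ Fact.out) (hCp ▸ Fact.out) hBC
  have hlow : p ^ 2 ≤ Nat.card ↥(B ⊔ C) := by
    simpa [hinf, hBp, hCp, sq] using card_mul_card_le_card_sup_mul_card_inf B C
  have hup : Nat.card ↥(B ⊔ C) ≤ p ^ 2 :=
    calc Nat.card ↥(B ⊔ C)
        = (centralizer (B : Set G) ⊓ centralizer (C : Set G)).index := by
          rw [(hB.sup hC).card_eq_index_centralizer hbot, centralizer_sup]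
      _ ≤ (centralizer (B : Set G)).index * (centralizer (C : Set G)).index := index_inf_le
      _ = p ^ 2 := by
          rw [← hB.card_eq_index_centralizer hbot, ← hC.card_eq_index_centralizer hbot, hBp, hCp,
            sq]
  have := IsPGroup.isMulCommutative_of_card_eq_prime_sq (le_antisymm hup hlow)
  exact le_sup_left.trans ((le_centralizer_iff_isMulCommutative.mpr this).trans
    (centralizer_le (SetLike.coe_subset_coe.mpr le_sup_right)))

theorem IsCDSubgroup.not_isCDSubgroup_bot_of_card_prime {A : Subgroup G} (hA : IsCDSubgroup A)
    (hp : (Nat.card A).Prime) : ¬ IsCDSubgroup (⊥ : Subgroup G) := by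
  intro hbot
  set p := Nat.card A
  have : Fact p.Prime := ⟨hp⟩
  let S := {B : Subgroup G // IsCDSubgroup B ∧ Nat.card B = p}
  have : Nonempty S := ⟨⟨A, hA, rfl⟩⟩
  let J := ⨆ B : S, B.1
  have hAJ : A ≤ J := le_iSup (fun B : S => B.1) ⟨A, hA, rfl⟩
  have hJ : IsCDSubgroup J :=
    SupClosed.iSup_mem_of_nonempty (s := {H : Subgroup G | IsCDSubgroup H})
      (fun _ hH _ hK => IsCDSubgroup.sup hH hK) fun B => B.2.1
  have hJnormal : J.Normal := by
    refine ⟨fun n hn g => ?_⟩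
    have hmap : J.map (MulAut.conj g).toMonoidHom ≤ J := by
      rw [Subgroup.map_iSup]
      refine iSup_le fun B => le_iSup_of_le ⟨_, B.2.1.map (MulAut.conj g), ?_⟩ le_rfl
      rw [card_map_of_injective (MulAut.conj g).injective, B.2.2]
    exact hmap (mem_map_of_mem _ hn)
  have hJcomm : J ≤ centralizer (J : Set G) :=
    iSup_le fun B => le_centralizer_iff.mpr <| iSup_le fun C =>
      C.2.1.le_centralizer_of_card_eq_prime B.2.1 hbot C.2.2 B.2.2
  have hJp : IsPGroup p J := fun x => ⟨1, Subtype.ext <| by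
    simpa using pow_eq_one_of_mem_iSup hJcomm (fun B y hy => by
      simpa [B.2.2] using congrArg Subtype.val (pow_card_eq_one' (G := B.1) (x := ⟨y, hy⟩))) x.2⟩
  obtain ⟨n, hn⟩ := IsPGroup.iff_card.mp hJp
  exact inf_center_ne_bot_of_index_centralizer_eq_prime_pow J (card_dvd_of_le hAJ)
    ((hJ.card_eq_index_centralizer hbot).symm.trans hn)
    (by rw [center_eq_bot_of_isCDSubgroup_bot hbot, inf_bot_eq])

theorem IsCDSubgroup.eq_of_card_prime (hH : IsCDSubgroup H) (hK : IsCDSubgroup K)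
    (hHp : (Nat.card H).Prime) (hKp : (Nat.card K).Prime) : H = K := by
  by_contra hne
  have hbot := hH.inf hK
  rw [inf_eq_bot_of_card_prime hHp hKp hne] at hbot
  exact hH.not_isCDSubgroup_bot_of_card_prime hHp hbot

end ChermakDelgado

theorem delta_cd_ge_num_prime_order_subgroups
    (G : Type*) [Group G] [Finite G] (k : ℕ)
    (hk : Nat.card {H : Subgroup G // (Nat.card H).Prime} = k) :
    k ≤ Nat.card {H : Subgroup G // ¬ ∀ K : Subgroup G, cdMeasure K ≤ cdMeasure H} := by
  classical
  subst hk
  let f : {H : Subgroup G // (Nat.card H).Prime} → {H : Subgroup G // ¬ IsCDSubgroup H} :=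
    fun H => if hH : IsCDSubgroup H.1 then ⟨⊥, hH.not_isCDSubgroup_bot_of_card_prime H.2⟩
      else ⟨H.1, hH⟩
  refine Nat.card_le_card_of_injective f fun H K hHK => ?_
  have hne_bot (L : {H : Subgroup G // (Nat.card H).Prime}) : L.1 ≠ ⊥ := fun h =>
    Nat.not_prime_one (by simpa [h] using L.2)
  simp only [f] at hHK
  split_ifs at hHK with hH hK hK
  · exact Subtype.ext (hH.eq_of_card_prime hK H.2 K.2)
  · exact absurd (congrArg Subtype.val hHK).symm (hne_bot K)
  · exact absurd (congrArg Subtype.val hHK) (hne_bot H)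
  · exact Subtype.ext (Subtype.mk.inj hHK)
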